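/- Let n ≥ 3, m ≥ 1, β > 0, and fix target Y = Σ_k y_k P_k ∈ ℂ^n. Let X(t) solve X'' + βX' = (-1)^{m+1}M^m(X - Y) with X(0) = X_0 = Σ_k α_k^0 P_k, constructed by choosing the free constant in the k = 0 mode so that the mode-0 coefficient tends to y_0 (i.e., a_0 = β(y_0 - α_0^0)), and all other free constants zero. Then X(t) → Y as t → ∞. -/

import Mathlib

/-- The discrete Laplacian circulant matrix `circ(-2,1,0,…,0,1)` over `ℂ`. -/
noncomputable def lapM (n : ℕ) [NeZero n] : Matrix (Fin n) (Fin n) ℂ :=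
  Matrix.of fun i j =>
    (if j = i + 1 then 1 else 0) + (if j = i - 1 then 1 else 0) + (if j = i then -2 else 0)

/-- The basis polygon `P_k = (1, ω^k, …, ω^{(n-1)k})` with `ω = e^{2πi/n}`. -/
noncomputable def Pvec (n k : ℕ) : Fin n → ℂ :=
  fun j => Complex.exp (2 * (Real.pi : ℂ) * Complex.I * (k : ℂ) * ((j : ℕ) : ℂ) / (n : ℂ))

/-!
Each `P_k` is an eigenvector of the circulant Laplacian with eigenvalue `-4 sin² (πk/n)`, so
`(-1)^(m+1) M^m` acts on the `k`-th mode as multiplication by `λ_{m,k}`. Hence `X - Y` splits into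
modes `(α_k - y_k) w_k(t) P_k`, and the system reduces to the scalar damped equations
`w'' + β w' = λ_{m,k} w`. Since `λ_{m,0} = 0` and `λ_{m,k} < 0` for `0 < k < n`, in each regime the
prescribed `w_k` is an exponential `e^{rt}` with `r² + βr = λ` and `r < 0`, or
`e^{-βt/2} cos(γt)` with `β²/4 + γ² = -λ`; both solve their equation, equal `1` at `t = 0` and
decay because `β > 0`.
-/

open Complex Filter Topology Finset Matrix

def IsDampedMode (β μ : ℝ) (w : ℝ → ℂ) : Prop :=
  ∃ w' : ℝ → ℂ, (∀ t, HasDerivAt w (w' t) t) ∧ ∀ t, HasDerivAt w' (μ * w t - β * w' t) t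

structure IsDecayingMode (β μ : ℝ) (w : ℝ → ℂ) : Prop where
  isDampedMode : IsDampedMode β μ w
  apply_zero : w 0 = 1
  tendsto_atTop : Tendsto w atTop (𝓝 0)

lemma hasDerivAt_cexp_mul_ofReal (p : ℂ) (t : ℝ) :
    HasDerivAt (fun t : ℝ => cexp (p * t)) (p * cexp (p * t)) t := by
  simpa [mul_comm] using (((hasDerivAt_id (t : ℂ)).const_mul p).cexp).comp_ofReal

lemma isDampedMode_cexp {β p : ℝ} :
    IsDampedMode β (p ^ 2 + β * p) (fun t => cexp (p * t)) := by
  refine ⟨fun t => p * cexp (p * t), hasDerivAt_cexp_mul_ofReal p, fun t => ?_⟩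
  refine ((hasDerivAt_cexp_mul_ofReal p t).const_mul (p : ℂ)).congr_deriv ?_
  push_cast
  ring

lemma isDampedMode_cexp_mul_cos {β q : ℝ} :
    IsDampedMode β (-(β ^ 2 / 4 + q ^ 2))
      (fun t => cexp (-(β : ℂ) * t / 2) * Real.cos (q * t)) := by
  set E : ℝ → ℂ := fun t => cexp (-(β : ℂ) / 2 * t)
  set C : ℝ → ℂ := fun t => Real.cos (q * t)
  set S : ℝ → ℂ := fun t => Real.sin (q * t)
  have hEC : (fun t : ℝ => cexp (-(β : ℂ) * t / 2) * Real.cos (q * t)) = fun t => E t * C t := by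
    ext t
    simp only [E, C, div_mul_eq_mul_div]
  rw [hEC]
  have hE : ∀ t, HasDerivAt E (-β / 2 * E t) t := hasDerivAt_cexp_mul_ofReal _
  have hC : ∀ t, HasDerivAt C (-q * S t) t := fun t => by
    simpa [C, S, mul_comm] using ((Real.hasDerivAt_cos (q * t)).comp t
      ((hasDerivAt_id t).const_mul q)).ofReal_comp
  have hS : ∀ t, HasDerivAt S (q * C t) t := fun t => by
    simpa [C, S, mul_comm] using ((Real.hasDerivAt_sin (q * t)).comp t
      ((hasDerivAt_id t).const_mul q)).ofReal_comp
  refine ⟨fun t => -β / 2 * E t * C t - q * E t * S t, fun t => ?_, fun t => ?_⟩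
  · exact ((hE t).mul (hC t)).congr_deriv (by ring)
  · refine ((((hE t).const_mul _).mul (hC t)).sub (((hE t).const_mul _).mul (hS t))).congr_deriv ?_
    push_cast
    ring

lemma tendsto_cexp_mul_ofReal_atTop {p : ℝ} (hp : p < 0) :
    Tendsto (fun t : ℝ => cexp (p * t)) atTop (𝓝 0) := by
  rw [tendsto_exp_nhds_zero_iff]
  simpa using tendsto_id.const_mul_atTop_of_neg hp

lemma tendsto_cexp_mul_cos_atTop {β : ℝ} (hβ : 0 < β) (q : ℝ) :
    Tendsto (fun t : ℝ => cexp (-(β : ℂ) * t / 2) * Real.cos (q * t)) atTop (𝓝 0) := by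
  refine Tendsto.zero_mul_isBoundedUnder_le ?_ ⟨1, eventually_map.2 (Eventually.of_forall
    fun t => by simpa only [Function.comp, norm_real, Real.norm_eq_abs] using
      Real.abs_cos_le_one (q * t))⟩
  rw [tendsto_exp_nhds_zero_iff]
  convert tendsto_id.const_mul_atTop_of_neg (neg_neg_of_pos (half_pos hβ)) using 2 with t
  simp only [neg_mul, div_ofNat_re, neg_re, mul_re, ofReal_re, ofReal_im, mul_zero, sub_zero, id_eq]
  ring

lemma isDecayingMode_cexp {β p : ℝ} (hp : p < 0) :
    IsDecayingMode β (p ^ 2 + β * p) (fun t => cexp (p * t)) :=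
  ⟨isDampedMode_cexp, by simp, tendsto_cexp_mul_ofReal_atTop hp⟩

lemma isDecayingMode_cexp_mul_cos {β : ℝ} (hβ : 0 < β) (q : ℝ) :
    IsDecayingMode β (-(β ^ 2 / 4 + q ^ 2))
      (fun t => cexp (-(β : ℂ) * t / 2) * Real.cos (q * t)) :=
  ⟨isDampedMode_cexp_mul_cos, by simp, tendsto_cexp_mul_cos_atTop hβ q⟩

lemma Pvec_apply_eq_pow (n k : ℕ) (j : Fin n) :
    Pvec n k j = cexp (2 * Real.pi * I * k / n) ^ (j : ℕ) := by
  rw [Pvec, ← Complex.exp_nat_mul]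
  ring_nf

section Circulant

variable {n : ℕ} [NeZero n]

lemma cexp_two_pi_I_mul_div_pow_self (k : ℕ) : cexp (2 * Real.pi * I * k / n) ^ n = 1 := by
  rw [← Complex.exp_nat_mul, mul_div_cancel₀ _ (NeZero.ne (n : ℂ)), mul_comm,
    ← Complex.exp_nat_mul_two_pi_mul_I k]

lemma Pvec_apply_add_one (k : ℕ) (i : Fin n) :
    Pvec n k (i + 1) = cexp (2 * Real.pi * I * k / n) * Pvec n k i := by
  rw [Pvec_apply_eq_pow, Pvec_apply_eq_pow, Fin.val_add, Fin.val_one', Nat.add_mod_mod,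
    ← pow_eq_pow_mod _ (cexp_two_pi_I_mul_div_pow_self k), pow_succ, mul_comm]

lemma Pvec_apply_sub_one (k : ℕ) (i : Fin n) :
    Pvec n k (i - 1) = (cexp (2 * Real.pi * I * k / n))⁻¹ * Pvec n k i := by
  rw [eq_inv_mul_iff_mul_eq₀ (Complex.exp_ne_zero _), ← Pvec_apply_add_one, sub_add_cancel]

lemma lapM_mulVec_apply (v : Fin n → ℂ) (i : Fin n) :
    (lapM n *ᵥ v) i = v (i + 1) + v (i - 1) - 2 * v i := by
  simp only [mulVec, dotProduct, lapM, of_apply, add_mul, ite_mul, one_mul, zero_mul, neg_mul,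
    sum_add_distrib, sum_ite_eq', mem_univ, if_true]
  ring

lemma cexp_add_cexp_inv_sub_two (x : ℝ) :
    cexp (2 * x * I) + (cexp (2 * x * I))⁻¹ - 2 = ((-4 * Real.sin x ^ 2 : ℝ) : ℂ) := by
  rw [← Complex.exp_neg, ← neg_mul, ← two_cos, cos_two_mul, cos_sq']
  push_cast
  ring

lemma lapM_mulVec_Pvec (k : ℕ) :
    lapM n *ᵥ Pvec n k = ((-4 * Real.sin (Real.pi * k / n) ^ 2 : ℝ) : ℂ) • Pvec n k := by
  ext i
  rw [lapM_mulVec_apply, Pvec_apply_add_one, Pvec_apply_sub_one, Pi.smul_apply, smul_eq_mul,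
    ← cexp_add_cexp_inv_sub_two]
  push_cast
  ring_nf

lemma lapM_pow_mulVec_Pvec (k m : ℕ) :
    lapM n ^ m *ᵥ Pvec n k = (((-4 * Real.sin (Real.pi * k / n) ^ 2) ^ m : ℝ) : ℂ) • Pvec n k := by
  induction m with
  | zero => simp
  | succ m ih =>
    rw [pow_succ', ← Matrix.mulVec_mulVec, ih, Matrix.mulVec_smul, lapM_mulVec_Pvec, smul_smul]
    push_cast
    ring_nf

lemma neg_one_pow_succ_smul_lapM_pow_mulVec_Pvec (k m : ℕ) :
    ((-1 : ℂ) ^ (m + 1) • lapM n ^ m) *ᵥ Pvec n k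
      = ((-(4 : ℝ) ^ m * Real.sin (Real.pi * k / n) ^ (2 * m) : ℝ) : ℂ) • Pvec n k := by
  rw [Matrix.smul_mulVec, lapM_pow_mulVec_Pvec, smul_smul, pow_succ, mul_comm _ (-1), mul_assoc]
  push_cast
  rw [← mul_pow]
  ring_nf

end Circulant

lemma deriv_deriv_add_smul_deriv_of_isDampedMode {ι N : Type*} [Fintype N]
    (A : Matrix N N ℂ) {β : ℝ} {s : Finset ι} {v : ι → N → ℂ} {μ : ι → ℝ}
    (hv : ∀ k ∈ s, A *ᵥ v k = (μ k : ℂ) • v k) {w : ι → ℝ → ℂ}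
    (hw : ∀ k ∈ s, IsDampedMode β (μ k) (w k)) {c d : ι → ℂ} {X : ℝ → N → ℂ}
    (hX : ∀ t, X t = ∑ k ∈ s, (c k + d k * w k t) • v k) (t : ℝ) :
    deriv (deriv X) t + β • deriv X t = A *ᵥ (X t - ∑ k ∈ s, c k • v k) := by
  choose! w' hw' hw'' using hw
  have hX' : deriv X = fun t => ∑ k ∈ s, (d k * w' k t) • v k := funext fun t => by
    rw [funext hX]
    exact (HasDerivAt.fun_sum fun k hk =>
      (((hw' k hk t).const_mul (d k)).const_add (c k)).smul_const (v k)).deriv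
  have hX'' : HasDerivAt (deriv X) (∑ k ∈ s, (d k * (μ k * w k t - β * w' k t)) • v k) t := by
    rw [hX']
    exact HasDerivAt.fun_sum fun k hk => ((hw'' k hk t).const_mul (d k)).smul_const (v k)
  rw [hX''.deriv, hX', hX, ← sum_sub_distrib, Matrix.mulVec_sum, smul_sum, ← sum_add_distrib]
  refine sum_congr rfl fun k hk => ?_
  rw [← sub_smul, Matrix.mulVec_smul, hv k hk, smul_smul, ← Complex.coe_smul, smul_smul,
    ← add_smul]
  congr 1
  ring

lemma isDecayingMode_of_regimes {β lam γ r : ℝ} (hβ : 0 < β) (hlam : lam < 0)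
    (hγ : γ = √(-lam - β ^ 2 / 4)) (hr : r = -β / 2 + √(β ^ 2 / 4 + lam)) {z : ℝ → ℂ}
    (hover : |lam| < β ^ 2 / 4 → ∀ t : ℝ, z t = cexp (r * t))
    (hcrit : lam = -β ^ 2 / 4 → ∀ t : ℝ, z t = cexp (-(β : ℂ) * t / 2))
    (hosc : β ^ 2 / 4 < |lam| → ∀ t : ℝ, z t = cexp (-(β : ℂ) * t / 2) * Real.cos (γ * t)) :
    IsDecayingMode β lam z := by
  rw [abs_of_neg hlam] at hover hosc
  rcases lt_or_ge (-lam) (β ^ 2 / 4) with hlt | hge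
  · obtain rfl : z = _ := funext (hover hlt)
    have hsq : √(β ^ 2 / 4 + lam) ^ 2 = β ^ 2 / 4 + lam := Real.sq_sqrt (by linarith)
    have hroot : r ^ 2 + β * r = lam := by rw [hr]; linear_combination hsq
    have hneg : r < 0 := by
      have := (Real.sqrt_lt' (half_pos hβ)).2 (by linarith : β ^ 2 / 4 + lam < (β / 2) ^ 2)
      linarith
    exact hroot ▸ isDecayingMode_cexp hneg
  · have hz : ∀ t : ℝ, z t = cexp (-(β : ℂ) * t / 2) * Real.cos (γ * t) := by
      rcases hge.lt_or_eq with hgt | heq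
      · exact hosc hgt
      · intro t
        rw [hcrit (by linarith) t, hγ, ← heq, sub_self, Real.sqrt_zero, zero_mul, Real.cos_zero,
          ofReal_one, mul_one]
    obtain rfl : z = _ := funext hz
    have hsq : γ ^ 2 = -lam - β ^ 2 / 4 := by rw [hγ]; exact Real.sq_sqrt (by linarith)
    have hμ : -(β ^ 2 / 4 + γ ^ 2) = lam := by linarith
    exact hμ ▸ isDecayingMode_cexp_mul_cos hβ γ

lemma sin_pi_mul_div_pos {k n : ℕ} (hk : 0 < k) (hkn : k < n) :
    0 < Real.sin (Real.pi * k / n) := by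
  have hn : (0 : ℝ) < n := by exact_mod_cast hk.trans hkn
  refine Real.sin_pos_of_pos_of_lt_pi (by positivity) ?_
  rw [div_lt_iff₀ hn]
  exact mul_lt_mul_of_pos_left (by exact_mod_cast hkn) Real.pi_pos

theorem yau_difference_convergence_general (n m : ℕ) [NeZero n] (hm : 1 ≤ m)
    (β : ℝ) (hβ : 0 < β) (y α0 : ℕ → ℂ)
    (Y : Fin n → ℂ) (hY : Y = ∑ k ∈ Finset.range n, y k • Pvec n k)
    (lam γ rp : ℕ → ℝ)
    (hlam : ∀ k, lam k = -(4 : ℝ) ^ m * Real.sin (Real.pi * k / n) ^ (2 * m))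
    (hγ : ∀ k, γ k = Real.sqrt (-lam k - β ^ 2 / 4))
    (hrp : ∀ k, rp k = -β / 2 + Real.sqrt (β ^ 2 / 4 + lam k))
    (z : ℕ → ℝ → ℂ)
    (hzover : ∀ k, 1 ≤ k → |lam k| < β ^ 2 / 4 →
      ∀ t : ℝ, z k t = Complex.exp ((rp k : ℂ) * t))
    (hzcrit : ∀ k, 1 ≤ k → lam k = -β ^ 2 / 4 →
      ∀ t : ℝ, z k t = Complex.exp (-(β : ℂ) * t / 2))
    (hzosc : ∀ k, 1 ≤ k → β ^ 2 / 4 < |lam k| →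
      ∀ t : ℝ, z k t = Complex.exp (-(β : ℂ) * t / 2) * Real.cos (γ k * t))
    (X : ℝ → Fin n → ℂ)
    (hX : ∀ t : ℝ, X t
      = (y 0 + (α0 0 - y 0) * Complex.exp (-(β : ℂ) * t)) • Pvec n 0
        + ∑ k ∈ Finset.Ico 1 n, (y k + (α0 k - y k) * z k t) • Pvec n k) :
    (∀ t : ℝ, deriv (deriv X) t + β • deriv X t
        = ((-1 : ℂ) ^ (m + 1) • (lapM n) ^ m).mulVec (X t - Y)) ∧
      X 0 = ∑ k ∈ Finset.range n, α0 k • Pvec n k ∧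
      Filter.Tendsto X Filter.atTop (nhds Y) := by
  set w : ℕ → ℝ → ℂ := fun k => if k = 0 then fun t => cexp (-(β : ℂ) * t) else z k
  have hXw : ∀ t, X t = ∑ k ∈ range n, (y k + (α0 k - y k) * w k t) • Pvec n k := fun t => by
    rw [hX t, sum_range_eq_add_Ico _ (NeZero.pos n)]
    refine congrArg₂ _ rfl (sum_congr rfl fun k hk => ?_)
    simp only [w, if_neg (Nat.one_le_iff_ne_zero.1 (mem_Ico.1 hk).1)]
  have hmodes : ∀ k ∈ range n, IsDecayingMode β (lam k) (w k) := by
    intro k hk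
    obtain rfl | hk0 := eq_or_ne k 0
    · have hw0 : w 0 = fun t : ℝ => cexp ((-β : ℝ) * t) := by ext t; simp [w]
      have hμ : (-β) ^ 2 + β * (-β) = lam 0 := by
        rw [hlam, Nat.cast_zero, mul_zero, zero_div, Real.sin_zero, zero_pow (by omega), mul_zero]
        ring
      rw [hw0, ← hμ]
      exact isDecayingMode_cexp (neg_neg_of_pos hβ)
    · have hk1 : 1 ≤ k := Nat.one_le_iff_ne_zero.2 hk0
      have hlamk : lam k < 0 := by
        rw [hlam, neg_mul, neg_lt_zero]
        exact mul_pos (by positivity) (pow_pos (sin_pi_mul_div_pos hk1 (mem_range.1 hk)) _)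
      simp only [w, if_neg hk0]
      exact isDecayingMode_of_regimes hβ hlamk (hγ k) (hrp k) (hzover k hk1) (hzcrit k hk1)
        (hzosc k hk1)
  have heig : ∀ k ∈ range n,
      ((-1 : ℂ) ^ (m + 1) • lapM n ^ m) *ᵥ Pvec n k = (lam k : ℂ) • Pvec n k := fun k _ => by
    rw [neg_one_pow_succ_smul_lapM_pow_mulVec_Pvec, hlam]
  refine ⟨fun t => ?_, ?_, ?_⟩
  · rw [hY]
    exact deriv_deriv_add_smul_deriv_of_isDampedMode _ heig
      (fun k hk => (hmodes k hk).isDampedMode) hXw t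
  · rw [hXw]
    exact sum_congr rfl fun k hk => by rw [(hmodes k hk).apply_zero, mul_one, add_sub_cancel]
  · rw [hY, funext hXw]
    refine tendsto_finsetSum _ fun k hk => ?_
    simpa using (((hmodes k hk).tendsto_atTop.const_mul (α0 k - y k)).const_add (y k)).smul_const
      (Pvec n k)

/-- Convergence of the Yau difference flow to the target polygon: the solution of
`X'' + βX' = (-1)^{m+1} M^m (X - Y)` with `X(0) = X₀`, constructed with the mode-0
free constant chosen as `a₀ = β(y₀ - α⁰₀)` and all other free constants zero
(so each nonzero mode of `X - Y` carries a decaying factor `z_k(t)` depending on the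
eigenvalue regime), satisfies `X(t) → Y` as `t → ∞`. -/
theorem yau_difference_convergence (n m : ℕ) [NeZero n] (hn : 3 ≤ n) (hm : 1 ≤ m)
    (β : ℝ) (hβ : 0 < β) (y α0 : ℕ → ℂ)
    (Y : Fin n → ℂ) (hY : Y = ∑ k ∈ Finset.range n, y k • Pvec n k)
    (lam γ rp : ℕ → ℝ)
    (hlam : ∀ k, lam k = -(4 : ℝ) ^ m * Real.sin (Real.pi * k / n) ^ (2 * m))
    (hγ : ∀ k, γ k = Real.sqrt (-lam k - β ^ 2 / 4))
    (hrp : ∀ k, rp k = -β / 2 + Real.sqrt (β ^ 2 / 4 + lam k))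
    (z : ℕ → ℝ → ℂ)
    (hzover : ∀ k, 1 ≤ k → |lam k| < β ^ 2 / 4 →
      ∀ t : ℝ, z k t = Complex.exp ((rp k : ℂ) * t))
    (hzcrit : ∀ k, 1 ≤ k → lam k = -β ^ 2 / 4 →
      ∀ t : ℝ, z k t = Complex.exp (-(β : ℂ) * t / 2))
    (hzosc : ∀ k, 1 ≤ k → β ^ 2 / 4 < |lam k| →
      ∀ t : ℝ, z k t = Complex.exp (-(β : ℂ) * t / 2) * Real.cos (γ k * t))
    (X : ℝ → Fin n → ℂ)
    (hX : ∀ t : ℝ, X t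
      = (y 0 + (α0 0 - y 0) * Complex.exp (-(β : ℂ) * t)) • Pvec n 0
        + ∑ k ∈ Finset.Ico 1 n, (y k + (α0 k - y k) * z k t) • Pvec n k) :
    (∀ t : ℝ, deriv (deriv X) t + β • deriv X t
        = ((-1 : ℂ) ^ (m + 1) • (lapM n) ^ m).mulVec (X t - Y)) ∧
      X 0 = ∑ k ∈ Finset.range n, α0 k • Pvec n k ∧
      Filter.Tendsto X Filter.atTop (nhds Y) :=
  yau_difference_convergence_general n m hm β hβ y α0 Y hY lam γ rp hlam hγ hrp z hzover hzcrit
    hzosc X hX
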